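/- Let L be a bounded invertible operator on the complex Hilbert space H = M ⊕ N (M a closed subspace, N = M^⊥), and suppose the compression R = P_M L|_M is an invertible operator on M. Then the compression Λ = P_N L^{-1}|_N is an invertible operator on N, and one has the identity (as bounded operators on H): ι_M R^{-1} P_M = L^{-1} − L^{-1} ι_N Λ^{-1} P_N L^{-1}, where ι_M : M → H and ι_N : N → H are the inclusion maps. -/

import Mathlib

/-!
Let `K = L⁻¹`, `E = ι_M R⁻¹ P_M` and `G = L - L E L`, the Schur complement of the corner `R`.
`G` vanishes on `M` and takes values in `Mᗮ`, so compression to `Mᗮ` is multiplicative on `K G`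
and `G K`. Since `K G = 1 - E L` and `G K = 1 - L E`, where `E` vanishes on `Mᗮ` and takes values
in `M`, the compression of `G` is a two-sided inverse of `Λ`. Finally `ι_N Λ⁻¹ P_N = G` and
`K G K = K - E`.
-/

open ContinuousLinearMap

namespace Submodule

variable {𝕜 E : Type*} [RCLike 𝕜] [NormedAddCommGroup E] [InnerProductSpace 𝕜 E]

noncomputable def compression (V : Submodule 𝕜 E) [V.HasOrthogonalProjection] (T : E →L[𝕜] E) :
    V →L[𝕜] V :=
  V.orthogonalProjectionOnto ∘L T ∘L V.subtypeL

@[simp]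
theorem compression_one (V : Submodule 𝕜 E) [V.HasOrthogonalProjection] :
    V.compression 1 = 1 := by
  ext; simp [compression]

@[simp]
theorem compression_sub (V : Submodule 𝕜 E) [V.HasOrthogonalProjection] (S T : E →L[𝕜] E) :
    V.compression (S - T) = V.compression S - V.compression T := by
  simp [compression, sub_comp, comp_sub]

variable (M : Submodule 𝕜 E) [M.HasOrthogonalProjection]

theorem compression_orthogonal_mul_of_comp_subtypeL_eq_zero {A : E →L[𝕜] E}
    (hA : A ∘L M.subtypeL = 0) (B : E →L[𝕜] E) :
    Mᗮ.compression A * Mᗮ.compression B = Mᗮ.compression (A * B) := by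
  have hA' (x : E) : A (M.starProjection x) = 0 := DFunLike.congr_fun hA _
  ext x
  simp [compression, orthogonalProjectionOnto_orthogonal, hA']

theorem compression_orthogonal_mul_of_orthogonalProjectionOnto_comp_eq_zero (A : E →L[𝕜] E)
    {B : E →L[𝕜] E} (hB : M.orthogonalProjectionOnto ∘L B = 0) :
    Mᗮ.compression A * Mᗮ.compression B = Mᗮ.compression (A * B) := by
  have hB' (x : E) : M.starProjection (B x) = 0 :=
    congrArg Subtype.val (DFunLike.congr_fun hB x)
  ext x
  simp [compression, orthogonalProjectionOnto_orthogonal, hB']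

theorem subtypeL_comp_compression_orthogonal_comp {T : E →L[𝕜] E}
    (hl : T ∘L M.subtypeL = 0) (hr : M.orthogonalProjectionOnto ∘L T = 0) :
    Mᗮ.subtypeL ∘L Mᗮ.compression T ∘L Mᗮ.orthogonalProjectionOnto = T := by
  have hl' (x : E) : T (M.starProjection x) = 0 := DFunLike.congr_fun hl _
  have hr' (x : E) : M.starProjection (T x) = 0 :=
    congrArg Subtype.val (DFunLike.congr_fun hr x)
  ext x
  simp [compression, orthogonalProjectionOnto_orthogonal, hl', hr']

variable (L : E →L[𝕜] E)

noncomputable def compressionInverse : E →L[𝕜] E :=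
  M.subtypeL ∘L Ring.inverse (M.compression L) ∘L M.orthogonalProjectionOnto

/-- In block form `L = [[A, B], [C, D]]` with respect to `E = M ⊕ Mᗮ`, this is
`0 ⊕ (D - C A⁻¹ B)`. -/
noncomputable def schurComplement : E →L[𝕜] E :=
  L - L * M.compressionInverse L * L

theorem compression_orthogonal_compressionInverse_mul (T : E →L[𝕜] E) :
    Mᗮ.compression (M.compressionInverse L * T) = 0 := by
  ext x
  simp [compression, compressionInverse]

theorem compression_orthogonal_mul_compressionInverse (T : E →L[𝕜] E) :
    Mᗮ.compression (T * M.compressionInverse L) = 0 := by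
  ext x
  simp [compression, compressionInverse, orthogonalProjectionOnto_apply_of_mem_orthogonal x.2]

variable {L}

theorem compressionInverse_mul_comp_subtypeL (hR : IsUnit (M.compression L)) :
    (M.compressionInverse L * L) ∘L M.subtypeL = M.subtypeL := by
  ext m
  have h := DFunLike.congr_fun (Ring.inverse_mul_cancel _ hR) m
  simpa [compression, compressionInverse] using congrArg Subtype.val h

theorem orthogonalProjectionOnto_comp_mul_compressionInverse (hR : IsUnit (M.compression L)) :
    M.orthogonalProjectionOnto ∘L (L * M.compressionInverse L) = M.orthogonalProjectionOnto := by
  ext x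
  have h := DFunLike.congr_fun (Ring.mul_inverse_cancel _ hR) (M.orthogonalProjectionOnto x)
  simpa [compression, compressionInverse] using congrArg Subtype.val h

theorem schurComplement_comp_subtypeL (hR : IsUnit (M.compression L)) :
    M.schurComplement L ∘L M.subtypeL = 0 := by
  have h := M.compressionInverse_mul_comp_subtypeL hR
  rw [schurComplement, sub_comp, mul_assoc, ContinuousLinearMap.mul_def L, comp_assoc, h,
    sub_self]

theorem orthogonalProjectionOnto_comp_schurComplement (hR : IsUnit (M.compression L)) :
    M.orthogonalProjectionOnto ∘L M.schurComplement L = 0 := by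
  have h := M.orthogonalProjectionOnto_comp_mul_compressionInverse hR
  rw [schurComplement, comp_sub, ContinuousLinearMap.mul_def (L * _) L, ← comp_assoc, h,
    sub_self]

theorem inverse_mul_schurComplement (hL : IsUnit L) :
    Ring.inverse L * M.schurComplement L = 1 - M.compressionInverse L * L := by
  rw [schurComplement, mul_sub, ← mul_assoc, ← mul_assoc, Ring.inverse_mul_cancel L hL, one_mul]

theorem schurComplement_mul_inverse (hL : IsUnit L) :
    M.schurComplement L * Ring.inverse L = 1 - L * M.compressionInverse L := by
  rw [schurComplement, sub_mul, Ring.mul_inverse_cancel L hL, Ring.mul_inverse_cancel_right L _ hL]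

theorem inverse_mul_schurComplement_mul_inverse (hL : IsUnit L) :
    Ring.inverse L * M.schurComplement L * Ring.inverse L =
      Ring.inverse L - M.compressionInverse L := by
  rw [M.inverse_mul_schurComplement hL, sub_mul, one_mul, Ring.mul_inverse_cancel_right L _ hL]

theorem compression_orthogonal_inverse_mul_compression_schurComplement (hL : IsUnit L)
    (hR : IsUnit (M.compression L)) :
    Mᗮ.compression (Ring.inverse L) * Mᗮ.compression (M.schurComplement L) = 1 := by
  rw [compression_orthogonal_mul_of_orthogonalProjectionOnto_comp_eq_zero M _
      (M.orthogonalProjectionOnto_comp_schurComplement hR), M.inverse_mul_schurComplement hL,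
    compression_sub, compression_one, compression_orthogonal_compressionInverse_mul, sub_zero]

theorem compression_schurComplement_mul_compression_orthogonal_inverse (hL : IsUnit L)
    (hR : IsUnit (M.compression L)) :
    Mᗮ.compression (M.schurComplement L) * Mᗮ.compression (Ring.inverse L) = 1 := by
  rw [compression_orthogonal_mul_of_comp_subtypeL_eq_zero M
      (M.schurComplement_comp_subtypeL hR), M.schurComplement_mul_inverse hL,
    compression_sub, compression_one, compression_orthogonal_mul_compressionInverse, sub_zero]

theorem isUnit_compression_orthogonal_inverse (hL : IsUnit L) (hR : IsUnit (M.compression L)) :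
    IsUnit (Mᗮ.compression (Ring.inverse L)) :=
  ⟨⟨_, _, M.compression_orthogonal_inverse_mul_compression_schurComplement hL hR,
    M.compression_schurComplement_mul_compression_orthogonal_inverse hL hR⟩, rfl⟩

theorem inverse_compression_orthogonal_inverse (hL : IsUnit L) (hR : IsUnit (M.compression L)) :
    Ring.inverse (Mᗮ.compression (Ring.inverse L)) = Mᗮ.compression (M.schurComplement L) :=
  Ring.inverse_unit ⟨_, _, M.compression_orthogonal_inverse_mul_compression_schurComplement hL hR,
    M.compression_schurComplement_mul_compression_orthogonal_inverse hL hR⟩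

end Submodule

theorem stmt_2
    {H : Type*} [NormedAddCommGroup H] [InnerProductSpace ℂ H]
    (M : Submodule ℂ H) [CompleteSpace M]
    (L : H →L[ℂ] H) (hL : IsUnit L)
    (R : M →L[ℂ] M) (hR : R = (Submodule.orthogonalProjectionOnto M).comp (L.comp M.subtypeL))
    (hRunit : IsUnit R)
    (Λ : Mᗮ →L[ℂ] Mᗮ)
    (hΛ : Λ = (Submodule.orthogonalProjectionOnto Mᗮ).comp ((Ring.inverse L).comp Mᗮ.subtypeL)) :
    IsUnit Λ ∧
      M.subtypeL.comp ((Ring.inverse R).comp (Submodule.orthogonalProjectionOnto M)) =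
        Ring.inverse L -
          (Ring.inverse L).comp ((Mᗮ.subtypeL.comp ((Ring.inverse Λ).comp
            (Submodule.orthogonalProjectionOnto Mᗮ))).comp (Ring.inverse L)) := by
  change R = M.compression L at hR
  change Λ = Mᗮ.compression (Ring.inverse L) at hΛ
  subst hR hΛ
  refine ⟨M.isUnit_compression_orthogonal_inverse hL hRunit, ?_⟩
  rw [M.inverse_compression_orthogonal_inverse hL hRunit,
    M.subtypeL_comp_compression_orthogonal_comp (M.schurComplement_comp_subtypeL hRunit)
      (M.orthogonalProjectionOnto_comp_schurComplement hRunit)]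
  have h := M.inverse_mul_schurComplement_mul_inverse hL
  rw [ContinuousLinearMap.mul_def, ContinuousLinearMap.mul_def, comp_assoc] at h
  rw [← comp_assoc, h, sub_sub_cancel]
  rfl
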